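/- For all positive integers m, n, the function h(x) = sin x satisfies the Sturm–Liouville equation −σ(x)·d/dx(σ(x)·dh/dx) + 2m²·h(x) = 2·ρ(x)·h(x) for all real x, i.e. sin x is a solution of the associated periodic Sturm–Liouville problem with parameter l = m and eigenvalue λ = 2. -/

import Mathlib

open Real

/-- `σ(x) = √(m² + 4mn + n² − (m² − n²)cos 2x)`. -/
noncomputable def sigmaMN (m n : ℕ) (x : ℝ) : ℝ :=
  Real.sqrt ((m : ℝ) ^ 2 + 4 * m * n + n ^ 2 - ((m : ℝ) ^ 2 - n ^ 2) * Real.cos (2 * x))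

/-- `ρ(x) = (m+n)(m+n − (m−n)cos 2x)`. -/
noncomputable def rhoMN (m n : ℕ) (x : ℝ) : ℝ :=
  ((m : ℝ) + n) * ((m : ℝ) + n - ((m : ℝ) - n) * Real.cos (2 * x))

/-!
Writing `σ = √S`, the product rule collapses `σ · (σ g)'` to `S' g / 2 + S g'` wherever `S > 0`,
which removes the square root. For `g = cos` this turns the Sturm–Liouville operator applied to
`sin` into a trigonometric polynomial, and the equation becomes an identity in `sin x` and
`cos x` once `sin 2x` and `cos 2x` are expanded. The radicand `S` is positive because it equals
`m²(1 − cos 2x) + n²(1 + cos 2x) + 4mn`.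
-/

theorem sqrt_mul_deriv_sqrt_mul {f g : ℝ → ℝ} {f' g' x : ℝ} (hf : HasDerivAt f f' x)
    (hg : HasDerivAt g g' x) (hx : 0 < f x) :
    √(f x) * deriv (fun t => √(f t) * g t) x = f' * g x / 2 + f x * g' := by
  rw [HasDerivAt.deriv (f := fun t => √(f t) * g t) ((hf.sqrt hx.ne').mul hg)]
  have hs : √(f x) ≠ 0 := (sqrt_pos.2 hx).ne'
  field_simp
  rw [sq_sqrt hx.le]
  ring

noncomputable def sigmaSqMN (m n : ℕ) (x : ℝ) : ℝ :=
  (m : ℝ) ^ 2 + 4 * m * n + n ^ 2 - ((m : ℝ) ^ 2 - n ^ 2) * cos (2 * x)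

theorem sigmaMN_eq_sqrt (m n : ℕ) (x : ℝ) : sigmaMN m n x = √(sigmaSqMN m n x) := rfl

theorem hasDerivAt_sigmaSqMN (m n : ℕ) (x : ℝ) :
    HasDerivAt (sigmaSqMN m n) (2 * ((m : ℝ) ^ 2 - n ^ 2) * sin (2 * x)) x := by
  have hcos := ((hasDerivAt_id' x).const_mul 2).cos
  exact ((hcos.const_mul ((m : ℝ) ^ 2 - n ^ 2)).const_sub
    ((m : ℝ) ^ 2 + 4 * m * n + n ^ 2)).congr_deriv (by ring)

theorem sigmaSqMN_pos {m n : ℕ} (hm : 0 < m) (hn : 0 < n) (x : ℝ) : 0 < sigmaSqMN m n x := by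
  have hsplit : sigmaSqMN m n x
      = (m : ℝ) ^ 2 * (1 - cos (2 * x)) + (n : ℝ) ^ 2 * (1 + cos (2 * x)) + 4 * m * n := by
    rw [sigmaSqMN]; ring
  have hlo : 0 ≤ 1 - cos (2 * x) := sub_nonneg.2 (cos_le_one _)
  have hhi : 0 ≤ 1 + cos (2 * x) := by linarith [neg_one_le_cos (2 * x)]
  rw [hsplit]
  positivity

/-- `h(x) = sin x` solves the associated periodic Sturm–Liouville problem
`−σ(x)·d/dx(σ(x)·dh/dx) + 2l²·h = λ·ρ(x)·h` with parameter `l = m` and eigenvalue `λ = 2`. -/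
theorem sin_solves_sturm_liouville (m n : ℕ) (hm : 0 < m) (hn : 0 < n) (x : ℝ) :
    -(sigmaMN m n x * deriv (fun t : ℝ => sigmaMN m n t * deriv Real.sin t) x) +
      2 * (m : ℝ) ^ 2 * Real.sin x = 2 * rhoMN m n x * Real.sin x := by
  have hflux : (fun t => sigmaMN m n t * deriv sin t) = fun t => √(sigmaSqMN m n t) * cos t := by
    funext t
    rw [Real.deriv_sin, sigmaMN_eq_sqrt]
  rw [hflux, sigmaMN_eq_sqrt, sqrt_mul_deriv_sqrt_mul (hasDerivAt_sigmaSqMN m n x)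
    (hasDerivAt_cos x) (sigmaSqMN_pos hm hn x), sigmaSqMN, rhoMN, sin_two_mul, cos_two_mul]
  ring
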